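/- arXiv:2203.17128 — 4 statements merged into one kernel-verified Lean document; each statement's English description precedes it below -/
import Mathlib

section
/- Let Ω ⊂ ℝⁿ be bounded with finite Borel measure μ, let σ ∈ C¹(ℝ) be bounded with bounded derivative, let η be bounded and measurable, and let (c, w, b) be a random vector with |c| ≤ K₀ a.s. Define B(x,y) = η(x)η(y)·E[K_{c,w,b}(x,y)] and (𝓑v)(y) = ∫_Ω B(x,y)v(x)dμ(x). Then for every measurable v with g := η·v ∈ L²(μ), one has ⟨v, 𝓑v⟩_{L²(μ)} = E[ (∫_Ω σ(w·x+b) g(x) dμ(x))² + c²( ‖∫_Ω σ'(w·x+b) x g(x) dμ(x)‖² + (∫_Ω σ'(w·x+b) g(x) dμ(x))² ) ], and in particular ⟨v, 𝓑v⟩_{L²(μ)} ≥ 0, i.e. the quadratic form of 𝓑 is positive semidefinite. -/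
open scoped RealInnerProductSpace BigOperators
open MeasureTheory

/-!
The kernel factors through a feature map: `K_{c,w,b}(x,y) = ⟪Φ x, Φ y⟫` for
`Φ x = (σ(w·x+b), cσ'(w·x+b)·x, cσ'(w·x+b))` in the Hilbert sum `ℝ ⊕ ℝⁿ ⊕ ℝ`. On the bounded
set `Ω` we have `‖Φ x‖² ≤ Mσ² + c²Mσ'²(R² + 1)`, which is integrable in `(c,w,b)` because `c` is
bounded, so Fubini applies twice and gives `⟨v, 𝓑v⟩ = E ‖∫_Ω g Φ dμ‖²` with `g = η·v`. The three
coordinates of `∫_Ω g Φ dμ` are the three integrals of the statement.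
-/

/-- The neural tangent kernel summand
`K_{c,w,b}(x,y) = σ(w·x+b)σ(w·y+b) + c²σ'(w·x+b)σ'(w·y+b)(x·y+1)`. -/
noncomputable def NTK {n : ℕ} (σ : ℝ → ℝ) (c : ℝ) (w : EuclideanSpace ℝ (Fin n)) (b : ℝ)
    (x y : EuclideanSpace ℝ (Fin n)) : ℝ :=
  σ (⟪w, x⟫ + b) * σ (⟪w, y⟫ + b)
    + c ^ 2 * deriv σ (⟪w, x⟫ + b) * deriv σ (⟪w, y⟫ + b) * (⟪x, y⟫ + 1)

section FeatureKernel

variable {α β F : Type*} [MeasurableSpace α] [MeasurableSpace β] {ν : Measure α} {P : Measure β}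
  [NormedAddCommGroup F] [InnerProductSpace ℝ F]

theorem integrable_smul_apply_of_norm_sq_le {Φ : β → α → F} {g : α → ℝ} {C : β → ℝ}
    (hΦ : StronglyMeasurable (Function.uncurry Φ)) (hbd : ∀ᵐ x ∂ν, ∀ ω, ‖Φ ω x‖ ^ 2 ≤ C ω)
    (hg : Integrable g ν) (ω : β) : Integrable (fun x => g x • Φ ω x) ν :=
  hg.smul_bdd _ (hΦ.comp_measurable measurable_prodMk_left).aestronglyMeasurable
    (hbd.mono fun _ hx => Real.le_sqrt_of_sq_le (hx ω))

variable [SFinite ν] [SFinite P]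

theorem integral_mul_integral_swap {f : α → ℝ} {k : β → α → ℝ} {C : β → ℝ}
    (hf : Integrable f ν) (hk : AEStronglyMeasurable (Function.uncurry k) (P.prod ν))
    (hC : Integrable C P) (hbd : ∀ᵐ x ∂ν, ∀ ω, |k ω x| ≤ C ω) :
    ∫ x, f x * ∫ ω, k ω x ∂P ∂ν = ∫ ω, ∫ x, f x * k ω x ∂ν ∂P := by
  have hint : Integrable (Function.uncurry fun ω x => f x * k ω x) (P.prod ν) := by
    refine (hC.mul_prod hf.abs).mono' (hf.1.comp_snd.mul hk) ?_
    filter_upwards [Measure.quasiMeasurePreserving_snd.ae hbd] with z hz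
    simp only [Function.uncurry, Real.norm_eq_abs, abs_mul, mul_comm (C z.1)]
    exact mul_le_mul_of_nonneg_left (hz z.1) (abs_nonneg _)
  simp_rw [← integral_const_mul]
  exact (integral_integral_swap hint).symm

variable [CompleteSpace F]

theorem integral_mul_integral_mul_integral_inner_eq_integral_norm_sq {Φ : β → α → F} {g : α → ℝ}
    {C : β → ℝ} (hΦ : StronglyMeasurable (Function.uncurry Φ)) (hC : Integrable C P)
    (hbd : ∀ᵐ x ∂ν, ∀ ω, ‖Φ ω x‖ ^ 2 ≤ C ω) (hg : Integrable g ν) :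
    ∫ y, g y * ∫ x, g x * ∫ ω, ⟪Φ ω x, Φ ω y⟫ ∂P ∂ν ∂ν
      = ∫ ω, ‖∫ x, g x • Φ ω x ∂ν‖ ^ 2 ∂P := by
  set G := fun ω => ∫ x, g x • Φ ω x ∂ν
  have hnorm : ∀ᵐ x ∂ν, ∀ ω, ‖Φ ω x‖ ≤ √(C ω) :=
    hbd.mono fun x hx ω => Real.le_sqrt_of_sq_le (hx ω)
  have hinner : ∀ ω z, ∫ x, g x * ⟪z, Φ ω x⟫ ∂ν = ⟪z, G ω⟫ := fun ω z => by
    rw [← integral_inner (integrable_smul_apply_of_norm_sq_le hΦ hbd hg ω) z]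
    simp_rw [real_inner_smul_right]
  have hG : AEStronglyMeasurable G P :=
    (hg.1.comp_snd.smul hΦ.aestronglyMeasurable).integral_prod_right'
  have hGbd : ∀ ω, ‖G ω‖ ≤ (∫ x, |g x| ∂ν) * √(C ω) := fun ω => by
    rw [← integral_mul_const]
    refine norm_integral_le_of_norm_le (hg.abs.mul_const _) ?_
    filter_upwards [hnorm] with x hx
    rw [norm_smul, Real.norm_eq_abs]
    exact mul_le_mul_of_nonneg_left (hx ω) (abs_nonneg _)
  have hswap_inner : ∀ᵐ y ∂ν,
      ∫ x, g x * ∫ ω, ⟪Φ ω x, Φ ω y⟫ ∂P ∂ν = ∫ ω, ⟪Φ ω y, G ω⟫ ∂P := by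
    filter_upwards [hbd] with y hy
    rw [integral_mul_integral_swap hg
      (hΦ.inner (hΦ.comp_measurable (measurable_fst.prodMk measurable_const))).aestronglyMeasurable
      hC ?_]
    · simp_rw [real_inner_comm (Φ _ y), hinner]
    filter_upwards [hbd] with x hx ω
    have := abs_real_inner_le_norm (Φ ω x) (Φ ω y)
    nlinarith [hx ω, hy ω, sq_nonneg (‖Φ ω x‖ - ‖Φ ω y‖)]
  calc ∫ y, g y * ∫ x, g x * ∫ ω, ⟪Φ ω x, Φ ω y⟫ ∂P ∂ν ∂ν
      = ∫ y, g y * ∫ ω, ⟪Φ ω y, G ω⟫ ∂P ∂ν :=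
        integral_congr_ae (hswap_inner.mono fun y hy => by simp only [hy])
    _ = ∫ ω, ∫ y, g y * ⟪Φ ω y, G ω⟫ ∂ν ∂P := by
        refine integral_mul_integral_swap hg (hΦ.aestronglyMeasurable.inner hG.comp_fst)
          (hC.const_mul (∫ x, |g x| ∂ν)) ?_
        filter_upwards [hbd, hnorm] with y hy hy' ω
        have hL : 0 ≤ ∫ x, |g x| ∂ν := integral_nonneg fun x => abs_nonneg _
        calc |⟪Φ ω y, G ω⟫| ≤ ‖Φ ω y‖ * ‖G ω‖ := abs_real_inner_le_norm _ _
          _ ≤ √(C ω) * ((∫ x, |g x| ∂ν) * √(C ω)) := by gcongr; exacts [hy' ω, hGbd ω]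
          _ = (∫ x, |g x| ∂ν) * C ω := by
            rw [mul_left_comm, Real.mul_self_sqrt ((sq_nonneg _).trans (hy ω))]
    _ = ∫ ω, ‖G ω‖ ^ 2 ∂P := by
        simp_rw [real_inner_comm (G _), hinner, real_inner_self_eq_norm_sq]

end FeatureKernel

section NTKFeature

variable {n : ℕ} (σ : ℝ → ℝ) (c : ℝ) (w : EuclideanSpace ℝ (Fin n)) (b : ℝ)

noncomputable def ntkFeature (x : EuclideanSpace ℝ (Fin n)) :
    WithLp 2 (ℝ × WithLp 2 (EuclideanSpace ℝ (Fin n) × ℝ)) :=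
  WithLp.toLp 2 (σ (⟪w, x⟫ + b),
    WithLp.toLp 2 ((c * deriv σ (⟪w, x⟫ + b)) • x, c * deriv σ (⟪w, x⟫ + b)))

theorem NTK_eq_inner_ntkFeature (x y : EuclideanSpace ℝ (Fin n)) :
    NTK σ c w b x y = ⟪ntkFeature σ c w b x, ntkFeature σ c w b y⟫ := by
  simp only [NTK, ntkFeature, WithLp.prod_inner_apply, real_inner_smul_left,
    real_inner_smul_right, RCLike.inner_apply, conj_trivial]
  ring

theorem norm_ntkFeature_sq_le {Mσ Mσ' R : ℝ} (hσ : ∀ t, |σ t| ≤ Mσ) (hσ' : ∀ t, |deriv σ t| ≤ Mσ')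
    {x : EuclideanSpace ℝ (Fin n)} (hx : ‖x‖ ≤ R) :
    ‖ntkFeature σ c w b x‖ ^ 2 ≤ Mσ ^ 2 + c ^ 2 * (Mσ' ^ 2 * (R ^ 2 + 1)) := by
  rw [← real_inner_self_eq_norm_sq, ← NTK_eq_inner_ntkFeature, NTK, real_inner_self_eq_norm_sq]
  have h1 := sq_le_sq' (abs_le.mp (hσ (⟪w, x⟫ + b))).1 (abs_le.mp (hσ _)).2
  have h2 := sq_le_sq' (abs_le.mp (hσ' (⟪w, x⟫ + b))).1 (abs_le.mp (hσ' _)).2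
  have h3 := sq_le_sq' (by linarith [norm_nonneg x]) hx
  calc _ = σ (⟪w, x⟫ + b) ^ 2 + c ^ 2 * (deriv σ (⟪w, x⟫ + b) ^ 2 * (‖x‖ ^ 2 + 1)) := by ring
    _ ≤ _ := by gcongr

theorem norm_integral_smul_ntkFeature_sq {ν : Measure (EuclideanSpace ℝ (Fin n))}
    {g : EuclideanSpace ℝ (Fin n) → ℝ} (hg : Integrable (fun x => g x • ntkFeature σ c w b x) ν) :
    ‖∫ x, g x • ntkFeature σ c w b x ∂ν‖ ^ 2
      = (∫ x, σ (⟪w, x⟫ + b) * g x ∂ν) ^ 2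
        + c ^ 2 * (‖∫ x, (deriv σ (⟪w, x⟫ + b) * g x) • x ∂ν‖ ^ 2
          + (∫ x, deriv σ (⟪w, x⟫ + b) * g x ∂ν) ^ 2) := by
  have hfst := (WithLp.fstL 2 ℝ ℝ (WithLp 2 (EuclideanSpace ℝ (Fin n) × ℝ))).integral_comp_comm hg
  have hsnd := (WithLp.sndL 2 ℝ ℝ (WithLp 2 (EuclideanSpace ℝ (Fin n) × ℝ))).integral_comp_comm hg
  have hsndfst := (WithLp.fstL 2 ℝ (EuclideanSpace ℝ (Fin n)) ℝ).integral_comp_comm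
    ((WithLp.sndL 2 ℝ ℝ _).integrable_comp hg)
  have hsndsnd := (WithLp.sndL 2 ℝ (EuclideanSpace ℝ (Fin n)) ℝ).integral_comp_comm
    ((WithLp.sndL 2 ℝ ℝ _).integrable_comp hg)
  simp only [WithLp.fstL_apply, WithLp.sndL_apply, WithLp.smul_fst, WithLp.smul_snd,
    ntkFeature, WithLp.toLp_fst, WithLp.toLp_snd] at hfst hsnd hsndfst hsndsnd ⊢
  rw [WithLp.prod_norm_sq_eq_of_L2, WithLp.prod_norm_sq_eq_of_L2, ← hfst, ← hsnd, ← hsndfst,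
    ← hsndsnd]
  have hA : ∫ x, g x • σ (⟪w, x⟫ + b) ∂ν = ∫ x, σ (⟪w, x⟫ + b) * g x ∂ν := by
    simp_rw [smul_eq_mul, mul_comm (g _)]
  have hV : ∫ x, g x • (c * deriv σ (⟪w, x⟫ + b)) • x ∂ν
      = c • ∫ x, (deriv σ (⟪w, x⟫ + b) * g x) • x ∂ν := by
    rw [← integral_smul]
    congr with x
    rw [smul_smul, smul_smul, mul_left_comm, mul_comm (g x)]
  have hD : ∫ x, g x • (c * deriv σ (⟪w, x⟫ + b)) ∂ν
      = c * ∫ x, deriv σ (⟪w, x⟫ + b) * g x ∂ν := by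
    rw [← integral_const_mul]
    congr with x
    rw [smul_eq_mul]
    ring
  simp only [hA, hV, hD, norm_smul, Real.norm_eq_abs, mul_pow, sq_abs]
  ring

theorem stronglyMeasurable_ntkFeature {β : Type*} [MeasurableSpace β] {c : β → ℝ}
    {w : β → EuclideanSpace ℝ (Fin n)} {b : β → ℝ} (hσ : Measurable σ) (hc : Measurable c)
    (hw : Measurable w) (hb : Measurable b) :
    StronglyMeasurable (Function.uncurry fun ω x => ntkFeature σ (c ω) (w ω) (b ω) x) := by
  have harg : Measurable fun p : β × EuclideanSpace ℝ (Fin n) => ⟪w p.1, p.2⟫ + b p.1 :=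
    ((hw.comp measurable_fst).inner measurable_snd).add (hb.comp measurable_fst)
  have hd : Measurable fun p : β × EuclideanSpace ℝ (Fin n) =>
      c p.1 * deriv σ (⟪w p.1, p.2⟫ + b p.1) :=
    (hc.comp measurable_fst).mul ((measurable_deriv σ).comp harg)
  exact (WithLp.prod_continuous_toLp 2 _ _).comp_stronglyMeasurable
    ((hσ.comp harg).stronglyMeasurable.prodMk
      ((WithLp.prod_continuous_toLp 2 _ _).comp_stronglyMeasurable
        ((hd.smul measurable_snd).stronglyMeasurable.prodMk hd.stronglyMeasurable)))

end NTKFeature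

theorem exists_ae_restrict_norm_le {E : Type*} [NormedAddCommGroup E] [MeasurableSpace E]
    [OpensMeasurableSpace E] (μ : Measure E) {s : Set E} (hs : Bornology.IsBounded s) :
    ∃ R, ∀ᵐ x ∂μ.restrict s, ‖x‖ ≤ R := by
  obtain ⟨R, hR⟩ := isBounded_iff_forall_norm_le.mp hs.closure
  exact ⟨R, ae_restrict_of_ae_restrict_of_subset subset_closure
    ((ae_restrict_mem isClosed_closure.measurableSet).mono hR)⟩


theorem stmt_5_general {n : ℕ} (Ω : Set (EuclideanSpace ℝ (Fin n)))
    (hΩbd : Bornology.IsBounded Ω)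
    (μ : Measure (EuclideanSpace ℝ (Fin n))) [IsFiniteMeasure μ]
    (σ : ℝ → ℝ) (hσ : ContDiff ℝ 1 σ)
    (Mσ Mσ' : ℝ) (hσbd : ∀ x : ℝ, |σ x| ≤ Mσ) (hσ'bd : ∀ x : ℝ, |deriv σ x| ≤ Mσ')
    (η : EuclideanSpace ℝ (Fin n) → ℝ)
    {Ω' : Type*} [MeasurableSpace Ω'] (P : Measure Ω') [IsProbabilityMeasure P]
    (c : Ω' → ℝ) (w : Ω' → EuclideanSpace ℝ (Fin n)) (b : Ω' → ℝ)
    (hc : Measurable c) (hw : Measurable w) (hb : Measurable b)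
    (K₀ : ℝ) (hcbd : ∀ᵐ ω ∂P, |c ω| ≤ K₀)
    (B : EuclideanSpace ℝ (Fin n) → EuclideanSpace ℝ (Fin n) → ℝ)
    (hB : ∀ x y, B x y = η x * η y * ∫ ω, NTK σ (c ω) (w ω) (b ω) x y ∂P)
    (v : EuclideanSpace ℝ (Fin n) → ℝ)
    (hg : MemLp (fun x => η x * v x) 2 (μ.restrict Ω)) :
    (∫ y in Ω, v y * (∫ x in Ω, B x y * v x ∂μ) ∂μ)
      = ∫ ω, ((∫ x in Ω, σ (⟪w ω, x⟫ + b ω) * (η x * v x) ∂μ) ^ 2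
          + (c ω) ^ 2 *
            (‖∫ x in Ω, (deriv σ (⟪w ω, x⟫ + b ω) * (η x * v x)) • x ∂μ‖ ^ 2
              + (∫ x in Ω, deriv σ (⟪w ω, x⟫ + b ω) * (η x * v x) ∂μ) ^ 2)) ∂P ∧
    0 ≤ ∫ y in Ω, v y * (∫ x in Ω, B x y * v x ∂μ) ∂μ := by
  obtain ⟨R, hR⟩ := exists_ae_restrict_norm_le μ hΩbd
  have hc2 : Integrable (fun ω => c ω ^ 2) P :=
    (MemLp.of_bound (p := 2) hc.aestronglyMeasurable K₀
      (by simpa only [Real.norm_eq_abs] using hcbd)).integrable_sq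
  have hΦ := stronglyMeasurable_ntkFeature σ hσ.continuous.measurable hc hw hb
  have hΦbd : ∀ᵐ x ∂μ.restrict Ω, ∀ ω,
      ‖ntkFeature σ (c ω) (w ω) (b ω) x‖ ^ 2 ≤ Mσ ^ 2 + c ω ^ 2 * (Mσ' ^ 2 * (R ^ 2 + 1)) :=
    hR.mono fun x hx ω => norm_ntkFeature_sq_le σ (c ω) (w ω) (b ω) hσbd hσ'bd hx
  have hgint := hg.integrable one_le_two
  have hquad : ∫ y in Ω, v y * (∫ x in Ω, B x y * v x ∂μ) ∂μ
      = ∫ ω, ‖∫ x in Ω, (η x * v x) • ntkFeature σ (c ω) (w ω) (b ω) x ∂μ‖ ^ 2 ∂P := by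
    rw [← integral_mul_integral_mul_integral_inner_eq_integral_norm_sq hΦ
      ((integrable_const _).add (hc2.mul_const _)) hΦbd hgint]
    congr 1 with y
    rw [← integral_const_mul, ← integral_const_mul]
    congr 1 with x
    simp only [hB, NTK_eq_inner_ntkFeature]
    ring
  refine ⟨hquad.trans ?_, hquad ▸ integral_nonneg fun ω => by positivity⟩
  congr 1 with ω
  exact norm_integral_smul_ntkFeature_sq σ (c ω) (w ω) (b ω)
    (integrable_smul_apply_of_norm_sq_le hΦ hΦbd hgint ω)

/-- Fubini identity for the quadratic form of the limiting kernel operator `𝓑`: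
`⟨v, 𝓑v⟩ = E[(∫σ(w·x+b)g)² + c²(‖∫σ'(w·x+b)xg‖² + (∫σ'(w·x+b)g)²)]` with `g = η·v`,
hence positive semidefiniteness. -/
theorem stmt_5 {n : ℕ} (Ω : Set (EuclideanSpace ℝ (Fin n)))
    (hΩbd : Bornology.IsBounded Ω)
    (μ : Measure (EuclideanSpace ℝ (Fin n))) [IsFiniteMeasure μ]
    (σ : ℝ → ℝ) (hσ : ContDiff ℝ 1 σ)
    (Mσ Mσ' : ℝ) (hσbd : ∀ x : ℝ, |σ x| ≤ Mσ) (hσ'bd : ∀ x : ℝ, |deriv σ x| ≤ Mσ')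
    (η : EuclideanSpace ℝ (Fin n) → ℝ) (hηmeas : Measurable η)
    (Mη : ℝ) (hηbd : ∀ x, |η x| ≤ Mη)
    {Ω' : Type*} [MeasurableSpace Ω'] (P : Measure Ω') [IsProbabilityMeasure P]
    (c : Ω' → ℝ) (w : Ω' → EuclideanSpace ℝ (Fin n)) (b : Ω' → ℝ)
    (hc : Measurable c) (hw : Measurable w) (hb : Measurable b)
    (K₀ : ℝ) (hcbd : ∀ᵐ ω ∂P, |c ω| ≤ K₀)
    (B : EuclideanSpace ℝ (Fin n) → EuclideanSpace ℝ (Fin n) → ℝ)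
    (hB : ∀ x y, B x y = η x * η y * ∫ ω, NTK σ (c ω) (w ω) (b ω) x y ∂P)
    (v : EuclideanSpace ℝ (Fin n) → ℝ) (hvmeas : AEMeasurable v (μ.restrict Ω))
    (hg : MemLp (fun x => η x * v x) 2 (μ.restrict Ω)) :
    (∫ y in Ω, v y * (∫ x in Ω, B x y * v x ∂μ) ∂μ)
      = ∫ ω, ((∫ x in Ω, σ (⟪w ω, x⟫ + b ω) * (η x * v x) ∂μ) ^ 2
          + (c ω) ^ 2 *
            (‖∫ x in Ω, (deriv σ (⟪w ω, x⟫ + b ω) * (η x * v x)) • x ∂μ‖ ^ 2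
              + (∫ x in Ω, deriv σ (⟪w ω, x⟫ + b ω) * (η x * v x) ∂μ) ^ 2)) ∂P ∧
    0 ≤ ∫ y in Ω, v y * (∫ x in Ω, B x y * v x ∂μ) ∂μ :=
  stmt_5_general Ω hΩbd μ σ hσ Mσ Mσ' hσbd hσ'bd η P c w b hc hw hb K₀ hcbd B hB v hg
end

section
/- Let n ∈ ℕ, let σ ∈ C²(ℝ) be bounded with bounded first and second derivatives, let R > 0, C₁ > 0, ρ > 0, and N ≥ 1. Suppose for i = 1,…,N we are given parameter tuples (c₀ⁱ, w₀ⁱ, b₀ⁱ) and (c₁ⁱ, w₁ⁱ, b₁ⁱ) in ℝ × ℝⁿ × ℝ with |c₀ⁱ| ≤ C₁, |c₁ⁱ| ≤ C₁, |c₁ⁱ − c₀ⁱ| ≤ ρ, ‖w₁ⁱ − w₀ⁱ‖₁ ≤ ρ, and |b₁ⁱ − b₀ⁱ| ≤ ρ. For j ∈ {0,1} define A_j^N(x,y) = (1/N) Σ_{i=1}^N K_{c_jⁱ, w_jⁱ, b_jⁱ}(x,y). Then there exists a constant C depending only on σ, C₁, R and n (not on N or ρ) such that |A₁^N(x,y)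 − A₀^N(x,y)| ≤ C ρ for all x, y ∈ ℝⁿ with ‖x‖ ≤ R and ‖y‖ ≤ R. -/
/-!
The pre-activations `w·x + b` move by at most `(R + 1)ρ` on the ball of radius `R`, and `σ`, `σ'`
are bounded and, by the mean value theorem, Lipschitz. Telescoping each product in
`K_{c,w,b}(x,y)` therefore bounds the change of every summand of the empirical kernel by a
multiple of `ρ` that does not depend on the neuron, and averaging over the `N` neurons keeps it.
-/

open scoped RealInnerProductSpace BigOperators

theorem abs_mul_sub_mul_le {α : Type*} [CommRing α] [LinearOrder α] [IsStrictOrderedRing α]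
    (a₀ a₁ b₀ b₁ : α) : |a₁ * b₁ - a₀ * b₀| ≤ |a₁ - a₀| * |b₁| + |a₀| * |b₁ - b₀| := by
  rw [← abs_mul, ← abs_mul]
  calc |a₁ * b₁ - a₀ * b₀| = |(a₁ - a₀) * b₁ + a₀ * (b₁ - b₀)| := by ring_nf
    _ ≤ _ := abs_add_le _ _

theorem abs_sub_le_mul_abs_sub_of_abs_deriv_le {f : ℝ → ℝ} {L : ℝ} (hf : Differentiable ℝ f)
    (hL : ∀ t, |deriv f t| ≤ L) (s t : ℝ) : |f s - f t| ≤ L * |s - t| :=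
  convex_univ.norm_image_sub_le_of_norm_deriv_le (fun x _ => hf x) (fun x _ => hL x)
    (Set.mem_univ t) (Set.mem_univ s)

theorem abs_apply_mul_apply_sub_le {f : ℝ → ℝ} {M L δ u₀ u₁ v₀ v₁ : ℝ}
    (hf : Differentiable ℝ f) (hM : ∀ t, |f t| ≤ M) (hL : ∀ t, |deriv f t| ≤ L)
    (hu : |u₁ - u₀| ≤ δ) (hv : |v₁ - v₀| ≤ δ) :
    |f u₁ * f v₁ - f u₀ * f v₀| ≤ 2 * M * L * δ := by
  have hL₀ : 0 ≤ L := (abs_nonneg _).trans (hL 0)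
  have hδ : 0 ≤ δ := (abs_nonneg _).trans hu
  have hlip := abs_sub_le_mul_abs_sub_of_abs_deriv_le hf hL
  calc |f u₁ * f v₁ - f u₀ * f v₀| ≤ |f u₁ - f u₀| * |f v₁| + |f u₀| * |f v₁ - f v₀| :=
        abs_mul_sub_mul_le _ _ _ _
    _ ≤ (L * δ) * M + M * (L * δ) := by
      have hM₀ : 0 ≤ M := (abs_nonneg _).trans (hM 0)
      gcongr
      exacts [(hlip _ _).trans (by gcongr), hM _, hM _, (hlip _ _).trans (by gcongr)]
    _ = 2 * M * L * δ := by ring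

theorem abs_inv_card_mul_sum_le {ι : Type*} [Fintype ι] [Nonempty ι] {f : ι → ℝ} {K : ℝ}
    (hf : ∀ i, |f i| ≤ K) : |(Fintype.card ι : ℝ)⁻¹ * ∑ i, f i| ≤ K := by
  have hcard : (0 : ℝ) < Fintype.card ι := by exact_mod_cast Fintype.card_pos
  rw [abs_mul, abs_inv, abs_of_pos hcard, inv_mul_le_iff₀ hcard]
  calc |∑ i, f i| ≤ ∑ i, |f i| := Finset.abs_sum_le_sum_abs _ _
    _ ≤ ∑ _i : ι, K := Finset.sum_le_sum fun i _ => hf i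
    _ = Fintype.card ι * K := by simp

theorem abs_inner_le_sum_abs_mul_norm {ι : Type*} [Fintype ι] (w z : EuclideanSpace ℝ ι) :
    |⟪w, z⟫| ≤ (∑ k, |w k|) * ‖z‖ := by
  rw [PiLp.inner_apply, Finset.sum_mul]
  refine (Finset.abs_sum_le_sum_abs _ _).trans (Finset.sum_le_sum fun k _ => ?_)
  calc |⟪w k, z k⟫| ≤ ‖w k‖ * ‖z k‖ := abs_real_inner_le_norm _ _
    _ ≤ |w k| * ‖z‖ := by
      rw [Real.norm_eq_abs]; gcongr; exact PiLp.norm_apply_le z k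

theorem abs_preactivation_sub_le {ι : Type*} [Fintype ι] (w₀ w₁ z : EuclideanSpace ℝ ι)
    (b₀ b₁ : ℝ) :
    |(⟪w₁, z⟫ + b₁) - (⟪w₀, z⟫ + b₀)| ≤ (∑ k, |w₁ k - w₀ k|) * ‖z‖ + |b₁ - b₀| := by
  calc |(⟪w₁, z⟫ + b₁) - (⟪w₀, z⟫ + b₀)| = |⟪w₁ - w₀, z⟫ + (b₁ - b₀)| := by
        rw [inner_sub_left]; ring_nf
    _ ≤ |⟪w₁ - w₀, z⟫| + |b₁ - b₀| := abs_add_le _ _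
    _ ≤ (∑ k, |w₁ k - w₀ k|) * ‖z‖ + |b₁ - b₀| := by
      gcongr; simpa using abs_inner_le_sum_abs_mul_norm (w₁ - w₀) z

theorem abs_NTK_sub_le {n : ℕ} {σ : ℝ → ℝ} {M₀ M₁ M₂ C₁ R ρ c₀ c₁ b₀ b₁ : ℝ}
    {w₀ w₁ x y : EuclideanSpace ℝ (Fin n)}
    (hσ : Differentiable ℝ σ) (hσ' : Differentiable ℝ (deriv σ))
    (hM₀ : ∀ t, |σ t| ≤ M₀) (hM₁ : ∀ t, |deriv σ t| ≤ M₁)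
    (hM₂ : ∀ t, |deriv (deriv σ) t| ≤ M₂)
    (hc₀ : |c₀| ≤ C₁) (hc₁ : |c₁| ≤ C₁) (hc : |c₁ - c₀| ≤ ρ)
    (hw : ∑ k, |w₁ k - w₀ k| ≤ ρ) (hb : |b₁ - b₀| ≤ ρ) (hx : ‖x‖ ≤ R) (hy : ‖y‖ ≤ R) :
    |NTK σ c₁ w₁ b₁ x y - NTK σ c₀ w₀ b₀ x y|
      ≤ (2 * M₀ * M₁ * (R + 1)
          + (2 * C₁ * M₁ ^ 2 + C₁ ^ 2 * (2 * M₁ * M₂ * (R + 1))) * (R ^ 2 + 1)) * ρ := by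
  have hρ : 0 ≤ ρ := (abs_nonneg _).trans hb
  have hpre : ∀ z : EuclideanSpace ℝ (Fin n), ‖z‖ ≤ R →
      |(⟪w₁, z⟫ + b₁) - (⟪w₀, z⟫ + b₀)| ≤ (R + 1) * ρ := fun z hz => by
    have := mul_le_mul hw hz (norm_nonneg z) hρ
    linarith [abs_preactivation_sub_le w₀ w₁ z b₀ b₁]
  have hσσ := abs_apply_mul_apply_sub_le hσ hM₀ hM₁ (hpre x hx) (hpre y hy)
  have hσ'σ' := abs_apply_mul_apply_sub_le hσ' hM₁ hM₂ (hpre x hx) (hpre y hy)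
  have hsq : |c₁ ^ 2 - c₀ ^ 2| ≤ 2 * C₁ * ρ := by
    rw [sq_sub_sq, abs_mul]
    exact mul_le_mul (by linarith [abs_add_le c₁ c₀]) hc (abs_nonneg _)
      (by linarith [abs_nonneg c₀])
  have hxy : |⟪x, y⟫ + 1| ≤ R ^ 2 + 1 := by
    have := (abs_real_inner_le_norm x y).trans
      (mul_le_mul hx hy (norm_nonneg y) (by linarith [norm_nonneg x]))
    linarith [abs_add_le ⟪x, y⟫ 1, abs_one (α := ℝ), sq R]
  unfold NTK
  set u₀ := ⟪w₀, x⟫ + b₀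
  set u₁ := ⟪w₁, x⟫ + b₁
  set v₀ := ⟪w₀, y⟫ + b₀
  set v₁ := ⟪w₁, y⟫ + b₁
  have hσ'σ'₁ : |deriv σ u₁ * deriv σ v₁| ≤ M₁ ^ 2 := by
    rw [abs_mul, sq]
    exact mul_le_mul (hM₁ _) (hM₁ _) (abs_nonneg _) ((abs_nonneg _).trans (hM₁ 0))
  have hc₀sq : |c₀ ^ 2| ≤ C₁ ^ 2 := by
    rw [abs_pow]
    exact pow_le_pow_left₀ (abs_nonneg _) hc₀ 2
  have hcσ'σ' : |c₁ ^ 2 * (deriv σ u₁ * deriv σ v₁) - c₀ ^ 2 * (deriv σ u₀ * deriv σ v₀)|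
      ≤ 2 * C₁ * ρ * M₁ ^ 2 + C₁ ^ 2 * (2 * M₁ * M₂ * ((R + 1) * ρ)) :=
    (abs_mul_sub_mul_le _ _ _ _).trans (add_le_add
      (mul_le_mul hsq hσ'σ'₁ (abs_nonneg _) ((abs_nonneg _).trans hsq))
      (mul_le_mul hc₀sq hσ'σ' (abs_nonneg _) (sq_nonneg _)))
  calc _
      = |(σ u₁ * σ v₁ - σ u₀ * σ v₀)
          + (c₁ ^ 2 * (deriv σ u₁ * deriv σ v₁) - c₀ ^ 2 * (deriv σ u₀ * deriv σ v₀))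
            * (⟪x, y⟫ + 1)| := by
        congr 1; ring
    _ ≤ |σ u₁ * σ v₁ - σ u₀ * σ v₀|
          + |c₁ ^ 2 * (deriv σ u₁ * deriv σ v₁) - c₀ ^ 2 * (deriv σ u₀ * deriv σ v₀)|
            * |⟪x, y⟫ + 1| := by
        rw [← abs_mul]; exact abs_add_le _ _
    _ ≤ 2 * M₀ * M₁ * ((R + 1) * ρ)
          + (2 * C₁ * ρ * M₁ ^ 2 + C₁ ^ 2 * (2 * M₁ * M₂ * ((R + 1) * ρ))) * (R ^ 2 + 1) :=
        add_le_add hσσ (mul_le_mul hcσ'σ' hxy (abs_nonneg _) ((abs_nonneg _).trans hcσ'σ'))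
    _ = _ := by ring

theorem stmt_7_general (n : ℕ) (σ : ℝ → ℝ) (hσ : ContDiff ℝ 2 σ)
    (hσ0 : ∃ M : ℝ, ∀ x : ℝ, |σ x| ≤ M)
    (hσ1 : ∃ M : ℝ, ∀ x : ℝ, |deriv σ x| ≤ M)
    (hσ2 : ∃ M : ℝ, ∀ x : ℝ, |deriv (deriv σ) x| ≤ M)
    (R C₁ : ℝ) :
    ∃ C : ℝ, ∀ (N : ℕ), 1 ≤ N → ∀ (ρ : ℝ), 0 < ρ →
      ∀ (c₀ c₁ : Fin N → ℝ) (w₀ w₁ : Fin N → EuclideanSpace ℝ (Fin n))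
        (b₀ b₁ : Fin N → ℝ),
        (∀ i, |c₀ i| ≤ C₁) → (∀ i, |c₁ i| ≤ C₁) →
        (∀ i, |c₁ i - c₀ i| ≤ ρ) →
        (∀ i, (∑ k : Fin n, |w₁ i k - w₀ i k|) ≤ ρ) →
        (∀ i, |b₁ i - b₀ i| ≤ ρ) →
        ∀ x y : EuclideanSpace ℝ (Fin n), ‖x‖ ≤ R → ‖y‖ ≤ R →
          |(N : ℝ)⁻¹ * (∑ i : Fin N, NTK σ (c₁ i) (w₁ i) (b₁ i) x y)
            - (N : ℝ)⁻¹ * (∑ i : Fin N, NTK σ (c₀ i) (w₀ i) (b₀ i) x y)| ≤ C * ρ := by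
  obtain ⟨M₀, hM₀⟩ := hσ0
  obtain ⟨M₁, hM₁⟩ := hσ1
  obtain ⟨M₂, hM₂⟩ := hσ2
  refine ⟨2 * M₀ * M₁ * (R + 1)
      + (2 * C₁ * M₁ ^ 2 + C₁ ^ 2 * (2 * M₁ * M₂ * (R + 1))) * (R ^ 2 + 1),
    fun N hN ρ _ c₀ c₁ w₀ w₁ b₀ b₁ hc₀ hc₁ hc hw hb x y hx hy => ?_⟩
  have : NeZero N := ⟨by omega⟩
  have hneuron := fun i => abs_NTK_sub_le (hσ.differentiable two_ne_zero)
    hσ.differentiable_deriv_two hM₀ hM₁ hM₂ (hc₀ i) (hc₁ i) (hc i) (hw i) (hb i) hx hy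
  rw [← mul_sub, ← Finset.sum_sub_distrib]
  simpa only [Fintype.card_fin] using abs_inv_card_mul_sum_le hneuron

/-- Stability of the empirical NTK under parameter perturbations: if the parameters of a
width-`N` network move by at most `ρ` (and the `c`'s stay bounded by `C₁`), then the
empirical kernels differ by at most `C·ρ` on the ball of radius `R`, with `C` depending
only on `σ`, `C₁`, `R` and `n`. -/
theorem stmt_7 (n : ℕ) (σ : ℝ → ℝ) (hσ : ContDiff ℝ 2 σ)
    (hσ0 : ∃ M : ℝ, ∀ x : ℝ, |σ x| ≤ M)
    (hσ1 : ∃ M : ℝ, ∀ x : ℝ, |deriv σ x| ≤ M)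
    (hσ2 : ∃ M : ℝ, ∀ x : ℝ, |deriv (deriv σ) x| ≤ M)
    (R C₁ : ℝ) (hR : 0 < R) (hC₁ : 0 < C₁) :
    ∃ C : ℝ, ∀ (N : ℕ), 1 ≤ N → ∀ (ρ : ℝ), 0 < ρ →
      ∀ (c₀ c₁ : Fin N → ℝ) (w₀ w₁ : Fin N → EuclideanSpace ℝ (Fin n))
        (b₀ b₁ : Fin N → ℝ),
        (∀ i, |c₀ i| ≤ C₁) → (∀ i, |c₁ i| ≤ C₁) →
        (∀ i, |c₁ i - c₀ i| ≤ ρ) →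
        (∀ i, (∑ k : Fin n, |w₁ i k - w₀ i k|) ≤ ρ) →
        (∀ i, |b₁ i - b₀ i| ≤ ρ) →
        ∀ x y : EuclideanSpace ℝ (Fin n), ‖x‖ ≤ R → ‖y‖ ≤ R →
          |(N : ℝ)⁻¹ * (∑ i : Fin N, NTK σ (c₁ i) (w₁ i) (b₁ i) x y)
            - (N : ℝ)⁻¹ * (∑ i : Fin N, NTK σ (c₀ i) (w₀ i) (b₀ i) x y)| ≤ C * ρ :=
  stmt_7_general n σ hσ hσ0 hσ1 hσ2 R C₁
end

section
/- Let H be a real Hilbert space, λ > 0, γ > 0, k₀ > 0. Let 𝓑 : H → H be a bounded self-adjoint linear operator with ⟨v, 𝓑v⟩ ≥ 0 and ‖𝓑v‖² ≤ λ⟨v, 𝓑v⟩ for all v ∈ H. Let 𝓛 : H → H be Lipschitz with constant k₀ and strongly monotone with constant γ: ⟨f₁ − f₂, 𝓛f₁ − 𝓛f₂⟩ ≤ −γ‖f₁ − f₂‖² for all f₁, f₂ ∈ H. Let u ∈ H satisfy 𝓛u = 0, and let Q : [0,∞) → H be differentiable with dQ_t/dt = 𝓑(𝓛(Q_t)) for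 all t ≥ 0, where Q₀ − u lies in the closure of the range of 𝓑 (i.e. for every ε > 0 there exists v₀ ∈ H with ‖Q₀ − u − 𝓑v₀‖ ≤ ε). Then (1/t) ∫₀ᵗ ‖Q_s − u‖² ds → 0 as t → ∞. -/
/-!
Pick `v₀` with `Q₀ - u - 𝓑v₀ = r`, `‖r‖ ≤ ε`, and let `v_t = v₀ + ∫₀ᵗ 𝓛Q_s ds`. Then `𝓑v_t = Q_t - u - r`
for all `t`, so the energy `⟨v_t, 𝓑v_t⟩ ≥ 0` has derivative `2⟨𝓛Q_t, Q_t - u - r⟩`, which by strong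
monotonicity, the Lipschitz bound `K` and Young's inequality is at most `-γ‖Q_t - u‖² + K²ε²/γ`.
Integrating, `γ ∫₀ᵗ ‖Q_s - u‖² ds ≤ ⟨v₀, 𝓑v₀⟩ + K²ε²t/γ`, so the time average of `‖Q_s - u‖²` has
`limsup` at most `(Kε/γ)²`, with `ε` arbitrary.
-/

open scoped RealInnerProductSpace NNReal
open MeasureTheory Set Filter Topology

theorem hasDerivWithinAt_integral_Ici {E : Type*} [NormedAddCommGroup E] [NormedSpace ℝ E]
    [CompleteSpace E] {g : ℝ → E} {a t : ℝ} (hg : ContinuousOn g (Ici a)) (ht : a ≤ t) :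
    HasDerivWithinAt (fun x => ∫ s in a..x, g s) (g t) (Ici a) t := by
  have : Fact (t ∈ Icc a (t + 1)) := ⟨⟨ht, by linarith⟩⟩
  have hg' : ContinuousOn g (Icc a (t + 1)) := hg.mono Icc_subset_Ici_self
  refine (intervalIntegral.integral_hasDerivWithinAt_right (s := Icc a (t + 1))
    (hg'.mono (uIcc_subset_Icc (left_mem_Icc.2 (by linarith)) Fact.out)).intervalIntegrable
    (hg'.stronglyMeasurableAtFilter_nhdsWithin measurableSet_Icc t) (hg' t Fact.out)
    ).mono_of_mem_nhdsWithin ?_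
  exact inter_mem_nhdsWithin _ (Iic_mem_nhds (by linarith))

theorem tendsto_one_div_mul_atTop_zero_of_le_add_mul {I : ℝ → ℝ} (hI : ∀ t, 0 ≤ t → 0 ≤ I t)
    (h : ∀ δ > 0, ∃ E, ∀ t, 0 ≤ t → I t ≤ E + δ * t) :
    Tendsto (fun t => 1 / t * I t) atTop (𝓝 0) := by
  refine tendsto_order.2 ⟨fun a ha => ?_, fun b hb => ?_⟩
  · filter_upwards [eventually_gt_atTop 0] with t ht
    exact ha.trans_le (mul_nonneg (by positivity) (hI t ht.le))
  · obtain ⟨E, hE⟩ := h (b / 2) (half_pos hb)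
    have hsmall : ∀ᶠ t in atTop, E * t⁻¹ < b / 2 := by
      have := tendsto_inv_atTop_zero.const_mul E
      rw [mul_zero] at this
      exact this.eventually (gt_mem_nhds (half_pos hb))
    filter_upwards [hsmall, eventually_gt_atTop 0] with t hsmall ht
    calc 1 / t * I t ≤ 1 / t * (E + b / 2 * t) := by gcongr; exact hE t ht.le
      _ = E * t⁻¹ + b / 2 := by field_simp
      _ < b := by linarith

theorem map_integral_eq_sub_of_hasDerivWithinAt {E F : Type*} [NormedAddCommGroup E]
    [NormedSpace ℝ E] [CompleteSpace E] [NormedAddCommGroup F] [NormedSpace ℝ F] [CompleteSpace F]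
    {B : E →L[ℝ] F} {g : ℝ → E} {Q : ℝ → F} (hg : ContinuousOn g (Ici 0))
    (hQ : ∀ t ∈ Ici (0 : ℝ), HasDerivWithinAt Q (B (g t)) (Ici 0) t) {t : ℝ} (ht : 0 ≤ t) :
    B (∫ s in 0..t, g s) = Q t - Q 0 := by
  have hg' : ContinuousOn g (uIcc 0 t) := hg.mono (by rw [uIcc_of_le ht]; exact Icc_subset_Ici_self)
  rw [← B.intervalIntegral_comp_comm hg'.intervalIntegrable]
  exact intervalIntegral.integral_eq_sub_of_hasDeriv_right_of_le ht
    (fun x hx => (hQ x hx.1).continuousWithinAt.mono Icc_subset_Ici_self)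
    (fun x hx => (hQ x hx.1.le).mono (Ioi_subset_Ici hx.1.le))
    (B.continuous.comp_continuousOn hg').intervalIntegrable

section

variable {H : Type*} [NormedAddCommGroup H] [InnerProductSpace ℝ H]

theorem HasDerivWithinAt.inner_map_self {B : H →L[ℝ] H} (hB : ∀ x y, ⟪B x, y⟫ = ⟪x, B y⟫)
    {v : ℝ → H} {v' : H} {s : Set ℝ} {t : ℝ} (hv : HasDerivWithinAt v v' s t) :
    HasDerivWithinAt (fun t => ⟪v t, B (v t)⟫) (2 * ⟪v', B (v t)⟫) s t := by
  refine (hv.inner ℝ (B.hasFDerivAt.comp_hasDerivWithinAt t hv)).congr_deriv ?_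
  rw [← hB, real_inner_comm, Function.comp_apply]
  ring

theorem two_mul_inner_sub_add_le {L : H → H} {K : ℝ≥0} {γ : ℝ} {u : H} (hγ : 0 < γ)
    (hLip : LipschitzWith K L) (hmono : ∀ f₁ f₂, ⟪f₁ - f₂, L f₁ - L f₂⟫ ≤ -γ * ‖f₁ - f₂‖ ^ 2)
    (hu : L u = 0) (f : H) {r : H} {ε : ℝ} (hr : ‖r‖ ≤ ε) :
    2 * ⟪L f, f - u - r⟫ + γ * ‖f - u‖ ^ 2 ≤ K ^ 2 * ε ^ 2 / γ := by
  have hdissip : ⟪L f, f - u⟫ ≤ -γ * ‖f - u‖ ^ 2 := by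
    simpa [hu, real_inner_comm] using hmono f u
  have hgrowth : ‖L f‖ ≤ K * ‖f - u‖ := by
    simpa [dist_eq_norm, hu] using hLip.dist_le_mul f u
  have hperturb : -(K * ‖f - u‖ * ε) ≤ ⟪L f, r⟫ := by
    refine neg_le_of_abs_le ((abs_real_inner_le_norm _ _).trans ?_)
    exact mul_le_mul hgrowth hr (norm_nonneg _) (by positivity)
  have hyoung : 2 * (K * ‖f - u‖ * ε) - γ * ‖f - u‖ ^ 2 ≤ K ^ 2 * ε ^ 2 / γ := by
    rw [le_div_iff₀ hγ]
    nlinarith [sq_nonneg (γ * ‖f - u‖ - K * ε)]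
  rw [inner_sub_right]
  linarith

variable [CompleteSpace H] {B : H →L[ℝ] H} {L : H → H} {K : ℝ≥0} {γ : ℝ} {u : H} {Q : ℝ → H}

theorem integral_norm_sub_sq_le (hγ : 0 < γ) (hB : ∀ x y, ⟪B x, y⟫ = ⟪x, B y⟫)
    (hBpos : ∀ v, 0 ≤ ⟪v, B v⟫) (hLip : LipschitzWith K L)
    (hmono : ∀ f₁ f₂, ⟪f₁ - f₂, L f₁ - L f₂⟫ ≤ -γ * ‖f₁ - f₂‖ ^ 2) (hu : L u = 0)
    (hQ : ∀ t ∈ Ici (0 : ℝ), HasDerivWithinAt Q (B (L (Q t))) (Ici 0) t)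
    {v₀ : H} {ε : ℝ} (hv₀ : ‖Q 0 - u - B v₀‖ ≤ ε) {t : ℝ} (ht : 0 ≤ t) :
    γ * (∫ s in 0..t, ‖Q s - u‖ ^ 2) ≤ ⟪v₀, B v₀⟫ + K ^ 2 * ε ^ 2 / γ * t := by
  set C := K ^ 2 * ε ^ 2 / γ
  have hQc : ContinuousOn Q (Ici 0) := fun t ht => (hQ t ht).continuousWithinAt
  have hLQc : ContinuousOn (fun s => L (Q s)) (Ici 0) := hLip.continuous.comp_continuousOn hQc
  have hdistc : ContinuousOn (fun s => ‖Q s - u‖ ^ 2) (Ici 0) :=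
    (hQc.sub continuousOn_const).norm.pow 2
  let v t := v₀ + ∫ s in 0..t, L (Q s)
  have hv : ∀ t ∈ Ici (0 : ℝ), HasDerivWithinAt v (L (Q t)) (Ici 0) t := fun t ht =>
    (hasDerivWithinAt_integral_Ici hLQc ht).const_add v₀
  have hBv : ∀ t ∈ Ici (0 : ℝ), B (v t) = Q t - u - (Q 0 - u - B v₀) := fun t ht => by
    rw [map_add, map_integral_eq_sub_of_hasDerivWithinAt hLQc hQ ht]
    abel
  let W t := ⟪v t, B (v t)⟫ + γ * (∫ s in 0..t, ‖Q s - u‖ ^ 2) - C * t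
  have hW : ∀ t ∈ Ici (0 : ℝ), HasDerivWithinAt W
      (2 * ⟪L (Q t), B (v t)⟫ + γ * ‖Q t - u‖ ^ 2 - C) (Ici 0) t := fun t ht => by
    have h := (((hv t ht).inner_map_self hB).add
      ((hasDerivWithinAt_integral_Ici hdistc ht).const_mul γ)).sub
      ((hasDerivWithinAt_id t _).const_mul C)
    rw [mul_one] at h
    exact h
  have hW_anti : AntitoneOn W (Ici 0) := by
    refine antitoneOn_of_hasDerivWithinAt_nonpos (convex_Ici 0)
      (fun t ht => (hW t ht).continuousWithinAt)
      (fun t ht => (hW t (interior_subset ht)).mono interior_subset) fun t ht => ?_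
    rw [hBv t (interior_subset ht)]
    linarith [two_mul_inner_sub_add_le hγ hLip hmono hu (Q t) hv₀]
  have hWt := hW_anti self_mem_Ici ht ht
  have hv0 : v 0 = v₀ := by simp [v]
  simp only [W, hv0, intervalIntegral.integral_same, mul_zero, add_zero, sub_zero] at hWt
  linarith [hBpos (v t)]

end

theorem stmt_13_general {H : Type*} [NormedAddCommGroup H] [InnerProductSpace ℝ H] [CompleteSpace H]
    (γ k₀ : ℝ) (hγ : 0 < γ)
    (B : H →L[ℝ] H) (hsa : ∀ x y : H, ⟪B x, y⟫ = ⟪x, B y⟫)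
    (hpos : ∀ v : H, 0 ≤ ⟪v, B v⟫)
    (L : H → H) (hLip : LipschitzWith k₀.toNNReal L)
    (hmono : ∀ f₁ f₂ : H, ⟪f₁ - f₂, L f₁ - L f₂⟫ ≤ -γ * ‖f₁ - f₂‖ ^ 2)
    (u : H) (hu : L u = 0)
    (Q : ℝ → H)
    (hQ : ∀ t ∈ Set.Ici (0 : ℝ), HasDerivWithinAt Q (B (L (Q t))) (Set.Ici 0) t)
    (hrange : ∀ ε : ℝ, 0 < ε → ∃ v₀ : H, ‖Q 0 - u - B v₀‖ ≤ ε) :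
    Filter.Tendsto (fun t : ℝ => (1 / t) * ∫ s in Set.Icc (0 : ℝ) t, ‖Q s - u‖ ^ 2)
      Filter.atTop (nhds 0) := by
  refine tendsto_one_div_mul_atTop_zero_of_le_add_mul
    (fun t _ => setIntegral_nonneg measurableSet_Icc fun s _ => sq_nonneg _) fun δ hδ => ?_
  set K := k₀.toNNReal
  -- chosen so that `(K ε / γ)² ≤ δ`
  set ε := γ * √δ / (K + 1)
  have hKε : K ^ 2 * ε ^ 2 / γ ≤ γ * δ := by
    have hlin : K * ε ≤ γ * √δ := by
      rw [mul_div_assoc', div_le_iff₀ (by positivity)]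
      nlinarith [mul_nonneg hγ.le (Real.sqrt_nonneg δ)]
    have hsq := pow_le_pow_left₀ (by positivity) hlin 2
    rw [mul_pow, mul_pow, Real.sq_sqrt hδ.le] at hsq
    rw [div_le_iff₀ hγ]
    nlinarith
  obtain ⟨v₀, hv₀⟩ := hrange ε (by positivity)
  refine ⟨⟪v₀, B v₀⟫ / γ, fun t ht => ?_⟩
  have hbound : γ * (∫ s in 0..t, ‖Q s - u‖ ^ 2) ≤ ⟪v₀, B v₀⟫ + γ * δ * t :=
    (integral_norm_sub_sq_le hγ hsa hpos hLip hmono hu hQ hv₀ ht).trans (by gcongr)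
  rw [integral_Icc_eq_integral_Ioc, ← intervalIntegral.integral_of_le ht, div_add' _ _ _ hγ.ne',
    le_div_iff₀ hγ]
  linarith

/-- Large-training-time convergence of the wide-network limit: if `dQ/dt = 𝓑(𝓛(Q_t))`
with `𝓑` positive self-adjoint satisfying `‖𝓑v‖² ≤ λ⟨v,𝓑v⟩`, `𝓛` Lipschitz and
strongly monotone, `𝓛u = 0`, and `Q₀ − u` lies in the closure of the range of `𝓑`,
then `(1/t)∫₀ᵗ ‖Q_s − u‖² ds → 0` as `t → ∞`. -/
theorem stmt_13 {H : Type*} [NormedAddCommGroup H] [InnerProductSpace ℝ H] [CompleteSpace H]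
    (lam γ k₀ : ℝ) (hlam : 0 < lam) (hγ : 0 < γ) (hk₀ : 0 < k₀)
    (B : H →L[ℝ] H) (hsa : ∀ x y : H, ⟪B x, y⟫ = ⟪x, B y⟫)
    (hpos : ∀ v : H, 0 ≤ ⟪v, B v⟫) (hBnorm : ∀ v : H, ‖B v‖ ^ 2 ≤ lam * ⟪v, B v⟫)
    (L : H → H) (hLip : LipschitzWith k₀.toNNReal L)
    (hmono : ∀ f₁ f₂ : H, ⟪f₁ - f₂, L f₁ - L f₂⟫ ≤ -γ * ‖f₁ - f₂‖ ^ 2)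
    (u : H) (hu : L u = 0)
    (Q : ℝ → H)
    (hQ : ∀ t ∈ Set.Ici (0 : ℝ), HasDerivWithinAt Q (B (L (Q t))) (Set.Ici 0) t)
    (hrange : ∀ ε : ℝ, 0 < ε → ∃ v₀ : H, ‖Q 0 - u - B v₀‖ ≤ ε) :
    Filter.Tendsto (fun t : ℝ => (1 / t) * ∫ s in Set.Icc (0 : ℝ) t, ‖Q s - u‖ ^ 2)
      Filter.atTop (nhds 0) :=
  stmt_13_general γ k₀ hγ B hsa hpos L hLip hmono u hu Q hQ hrange
end

section
/- Let H be a real Hilbert space, λ > 0, γ > 0. Let 𝓑 : H → H be a bounded self-adjoint linear operator with ⟨v, 𝓑v⟩ ≥ 0 and ‖𝓑v‖² ≤ λ⟨v, 𝓑v⟩ for all v ∈ H. Let v : [0,∞) → H be differentiable with ⟨𝓑v_t, v'_t⟩ ≤ −γ‖𝓑v_t‖² for all t ≥ 0. Then for every t ≥ 0, ∫₀ᵗ ‖𝓑v_s‖² ds ≤ ⟨v₀, 𝓑v₀⟩ / (2γ). -/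
open scoped RealInnerProductSpace

/-! The quadratic form `E(t) = ⟨v_t, 𝓑v_t⟩` is a Lyapunov function: by self-adjointness
`E' = 2⟨𝓑v_t, v'_t⟩ ≤ −2γ‖𝓑v_t‖²`, so integrating over `[0, t]` gives
`2γ ∫₀ᵗ ‖𝓑v_s‖² ds ≤ E(0) − E(t) ≤ E(0)`, the last step by positivity of `𝓑`. -/

open Set MeasureTheory

theorem HasDerivWithinAt.inner_apply_self {H : Type*} [NormedAddCommGroup H]
    [InnerProductSpace ℝ H] {B : H →L[ℝ] H} (hB : (B : H →ₗ[ℝ] H).IsSymmetric)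
    {v : ℝ → H} {v' : H} {s : Set ℝ} {x : ℝ} (hv : HasDerivWithinAt v v' s x) :
    HasDerivWithinAt (fun t => ⟪v t, B (v t)⟫) (2 * ⟪B (v x), v'⟫) s x := by
  refine (hv.inner ℝ (B.hasFDerivAt.comp_hasDerivWithinAt x hv)).congr_deriv ?_
  have hsymm : ⟪B (v x), v'⟫ = ⟪v x, B v'⟫ := hB (v x) v'
  rw [Function.comp_apply, ← hsymm, real_inner_comm v' (B (v x)), two_mul]

theorem mul_integral_le_sub_of_hasDerivWithinAt {E E' f : ℝ → ℝ} {a b c : ℝ} (hab : a ≤ b)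
    (hE : ContinuousOn E (Icc a b)) (hderiv : ∀ x ∈ Ioo a b, HasDerivWithinAt E (E' x) (Ioi x) x)
    (hf : IntegrableOn f (Icc a b)) (hdiss : ∀ x ∈ Ioo a b, E' x ≤ -c * f x) :
    c * ∫ x in a..b, f x ≤ E a - E b := by
  have h := intervalIntegral.sub_le_integral_of_hasDeriv_right_of_le hab hE hderiv
    (hf.const_mul (-c)) hdiss
  rw [intervalIntegral.integral_const_mul] at h
  linarith

theorem stmt_15_general {H : Type*} [NormedAddCommGroup H] [InnerProductSpace ℝ H]
    (γ : ℝ) (hγ : 0 < γ)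
    (B : H →L[ℝ] H) (hsa : ∀ x y : H, ⟪B x, y⟫ = ⟪x, B y⟫)
    (hpos : ∀ v : H, 0 ≤ ⟪v, B v⟫)
    (v : ℝ → H) (v' : ℝ → H)
    (hv : ∀ t ∈ Set.Ici (0 : ℝ), HasDerivWithinAt v (v' t) (Set.Ici 0) t)
    (hdiss : ∀ t ∈ Set.Ici (0 : ℝ), ⟪B (v t), v' t⟫ ≤ -γ * ‖B (v t)‖ ^ 2) :
    ∀ t : ℝ, 0 ≤ t →
      ∫ s in Set.Icc (0 : ℝ) t, ‖B (v s)‖ ^ 2 ≤ ⟪v 0, B (v 0)⟫ / (2 * γ) := by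
  intro t ht
  have hvc : ContinuousOn v (Icc 0 t) := fun s hs =>
    (hv s hs.1).continuousWithinAt.mono Icc_subset_Ici_self
  have hE : ContinuousOn (fun s => ⟪v s, B (v s)⟫) (Icc 0 t) := fun s hs =>
    ((hv s hs.1).inner_apply_self hsa).continuousWithinAt.mono Icc_subset_Ici_self
  have hf : IntegrableOn (fun s => ‖B (v s)‖ ^ 2) (Icc 0 t) :=
    ((B.continuous.comp_continuousOn hvc).norm.pow 2).integrableOn_Icc
  have key := mul_integral_le_sub_of_hasDerivWithinAt (c := 2 * γ) ht hE
    (fun s hs => ((hv s hs.1.le).inner_apply_self hsa).mono fun _ hu => hs.1.le.trans hu.out.le)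
    hf (fun s hs => by linarith [hdiss s hs.1.le])
  rw [integral_Icc_eq_integral_Ioc, ← intervalIntegral.integral_of_le ht,
    le_div_iff₀ (by positivity)]
  linarith [hpos (v t)]

/-- Dissipation estimate: if `⟨𝓑v_t, v'_t⟩ ≤ −γ‖𝓑v_t‖²` along a differentiable curve `v`,
with `𝓑` positive self-adjoint satisfying `‖𝓑v‖² ≤ λ⟨v,𝓑v⟩`, then
`∫₀ᵗ ‖𝓑v_s‖² ds ≤ ⟨v₀, 𝓑v₀⟩/(2γ)` for all `t ≥ 0`. -/
theorem stmt_15 {H : Type*} [NormedAddCommGroup H] [InnerProductSpace ℝ H] [CompleteSpace H]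
    (lam γ : ℝ) (hlam : 0 < lam) (hγ : 0 < γ)
    (B : H →L[ℝ] H) (hsa : ∀ x y : H, ⟪B x, y⟫ = ⟪x, B y⟫)
    (hpos : ∀ v : H, 0 ≤ ⟪v, B v⟫) (hBnorm : ∀ v : H, ‖B v‖ ^ 2 ≤ lam * ⟪v, B v⟫)
    (v : ℝ → H) (v' : ℝ → H)
    (hv : ∀ t ∈ Set.Ici (0 : ℝ), HasDerivWithinAt v (v' t) (Set.Ici 0) t)
    (hdiss : ∀ t ∈ Set.Ici (0 : ℝ), ⟪B (v t), v' t⟫ ≤ -γ * ‖B (v t)‖ ^ 2) :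
    ∀ t : ℝ, 0 ≤ t →
      ∫ s in Set.Icc (0 : ℝ) t, ‖B (v s)‖ ^ 2 ≤ ⟪v 0, B (v 0)⟫ / (2 * γ) :=
  stmt_15_general γ hγ B hsa hpos v v' hv hdiss
end
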